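/- Every J-circuit produced by the greedy procedure is undominated with respect to (J_+, J_−): if for some ordering j_1,...,j_m of J one assigns to each x_{j_i} in turn the smallest (if j_i ∈ J_+) or largest (if j_i ∈ J_−) still-available value that creates no cycle, then the resulting J-circuit is not dominated by any other J-circuit. -/

import Mathlib

/- Let `g` be a `J`-circuit dominating the greedy circuit `f`, and let `j` be the first index in
the greedy order at which `g` and `f` differ. Up to `j`, the assignment `g` agrees with `f`, so
giving `j` the value `g j` keeps the greedy prefix a circuit: `g j` was a legal choice at step `j`.
Greedy optimality then says `g j` is no better than `f j`, while domination says it is no worse;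
hence `g j = f j`, a contradiction. -/

/-- The partial assignment `f` on `J` creates no cycle. -/
def NoCycleOn {n : ℕ} (f : Fin n → Fin n) (J : Finset (Fin n)) : Prop :=
  ¬ ∃ j ∈ J, ∃ k, 0 < k ∧ (∀ t < k, f^[t] j ∈ J) ∧ f^[k] j = j

/-- A `J`-circuit: an injective, cycle-free partial assignment on `J`
(index `j` receives value `v_{f j}`). -/
def IsJCircuit {n : ℕ} (J : Finset (Fin n)) (f : Fin n → Fin n) : Prop :=
  Set.InjOn f J ∧ NoCycleOn f J

/-- `g` dominates `f` with respect to the partition `(J₊, J₋)`. -/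
def Dominates {n : ℕ} (v : Fin n → ℝ) (Jp Jm : Finset (Fin n)) (g f : Fin n → Fin n) : Prop :=
  (∃ j ∈ Jp ∪ Jm, g j ≠ f j) ∧ (∀ j ∈ Jp, v (g j) ≤ v (f j)) ∧ (∀ j ∈ Jm, v (f j) ≤ v (g j))

/-- `f` is the greedy assignment with respect to the ordering `l` of `J = J₊ ∪ J₋`:
at each step `i`, the value assigned to index `l.get i` is the smallest (if in `J₊`)
or largest (if in `J₋`) value for which the partial assignment on the prefix of `l`
up to position `i` remains an injective, cycle-free `J'`-circuit. -/
def GreedyWrt {n : ℕ} (v : Fin n → ℝ) (Jp Jm : Finset (Fin n)) (l : List (Fin n))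
    (f : Fin n → Fin n) : Prop :=
  ∀ i : Fin l.length,
    (l.get i ∈ Jp →
      IsLeast (v '' {k : Fin n |
        IsJCircuit (l.take (i.1 + 1)).toFinset (Function.update f (l.get i) k)})
        (v (f (l.get i)))) ∧
    (l.get i ∈ Jm →
      IsGreatest (v '' {k : Fin n |
        IsJCircuit (l.take (i.1 + 1)).toFinset (Function.update f (l.get i) k)})
        (v (f (l.get i))))

theorem Function.iterate_eq_of_eqOn {α : Type*} {f g : α → α} {S : Set α} (h : Set.EqOn f g S)
    {x : α} : ∀ {k : ℕ}, (∀ t < k, f^[t] x ∈ S) → f^[k] x = g^[k] x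
  | 0, _ => rfl
  | k + 1, hk => by
    rw [Function.iterate_succ_apply', Function.iterate_succ_apply',
      ← iterate_eq_of_eqOn h fun t ht => hk t (ht.trans k.lt_succ_self)]
    exact h (hk k k.lt_succ_self)

theorem NoCycleOn.congr {n : ℕ} {f g : Fin n → Fin n} {J : Finset (Fin n)}
    (h : Set.EqOn f g J) (hf : NoCycleOn f J) : NoCycleOn g J := by
  rintro ⟨j, hj, k, hk, hmem, hcyc⟩
  have hiter : ∀ {t}, t ≤ k → g^[t] j = f^[t] j := fun ht =>
    Function.iterate_eq_of_eqOn h.symm fun s hs => hmem s (hs.trans_le ht)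
  exact hf ⟨j, hj, k, hk, fun t ht => hiter ht.le ▸ hmem t ht, hiter le_rfl ▸ hcyc⟩

theorem IsJCircuit.congr {n : ℕ} {f g : Fin n → Fin n} {J : Finset (Fin n)}
    (h : Set.EqOn f g J) (hf : IsJCircuit J f) : IsJCircuit J g :=
  ⟨hf.1.congr h, hf.2.congr h⟩

theorem IsJCircuit.mono {n : ℕ} {f : Fin n → Fin n} {S J : Finset (Fin n)} (hS : S ⊆ J)
    (hf : IsJCircuit J f) : IsJCircuit S f := by
  refine ⟨hf.1.mono (Finset.coe_subset.mpr hS), ?_⟩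
  rintro ⟨j, hj, k, hk, hmem, hcyc⟩
  exact hf.2 ⟨j, hS hj, k, hk, fun t ht => hS (hmem t ht), hcyc⟩

theorem List.exists_first_ne {α β : Type*} {f g : α → β} :
    ∀ {l : List α}, (∃ x ∈ l, g x ≠ f x) →
      ∃ i : Fin l.length, g l[i] ≠ f l[i] ∧ ∀ x ∈ l.take i, g x = f x
  | [], ⟨_, hx, _⟩ => absurd hx List.not_mem_nil
  | a :: l, ⟨x, hx, hne⟩ => by
    by_cases ha : g a = f a
    · have hxl : x ∈ l := (List.mem_cons.mp hx).resolve_left (by rintro rfl; exact hne ha)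
      obtain ⟨i, hi, hpre⟩ := exists_first_ne ⟨x, hxl, hne⟩
      refine ⟨i.succ, hi, ?_⟩
      simpa [List.take_succ_cons, ha] using hpre
    · exact ⟨⟨0, by simp⟩, ha, by simp⟩

theorem IsJCircuit.update_getElem_of_eqOn_take {n : ℕ} {l : List (Fin n)} {f g : Fin n → Fin n}
    {i : Fin l.length} (hg : IsJCircuit (l.take (i.1 + 1)).toFinset g)
    (hpre : ∀ x ∈ l.take i, g x = f x) :
    IsJCircuit (l.take (i.1 + 1)).toFinset (Function.update f l[i.1] (g l[i.1])) := by
  refine hg.congr fun x hx => ?_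
  rw [Finset.mem_coe, List.mem_toFinset, ← List.take_append_getElem i.2, List.mem_append,
    List.mem_singleton] at hx
  rcases hx with hx | rfl
  · by_cases hxi : x = l[i.1]
    · rw [hxi, Function.update_self]
    · rw [Function.update_of_ne hxi, hpre x hx]
  · exact (Function.update_self l[i.1] _ f).symm

theorem GreedyWrt.le_of_eqOn_take {n : ℕ} {v : Fin n → ℝ} {Jp Jm : Finset (Fin n)}
    {l : List (Fin n)} {f g : Fin n → Fin n} (hgreedy : GreedyWrt v Jp Jm l f)
    (i : Fin l.length) (hg : IsJCircuit (l.take (i.1 + 1)).toFinset g)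
    (hpre : ∀ x ∈ l.take i, g x = f x) :
    (l[i] ∈ Jp → v (f l[i]) ≤ v (g l[i])) ∧ (l[i] ∈ Jm → v (g l[i]) ≤ v (f l[i])) := by
  have hcand := hg.update_getElem_of_eqOn_take hpre
  exact ⟨fun hp => ((hgreedy i).1 hp).2 ⟨_, hcand, rfl⟩,
    fun hm => ((hgreedy i).2 hm).2 ⟨_, hcand, rfl⟩⟩

/-- Every `J`-circuit produced by the greedy procedure (for any ordering of `J`)
is undominated with respect to `(J₊, J₋)`. -/
theorem stmt_6 (n : ℕ) (v : Fin n → ℝ) (hv : StrictMono v)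
    (Jp Jm : Finset (Fin n))
    (l : List (Fin n)) (hl : l.toFinset = Jp ∪ Jm)
    (f : Fin n → Fin n)
    (hgreedy : GreedyWrt v Jp Jm l f) :
    ¬ ∃ g : Fin n → Fin n, IsJCircuit (Jp ∪ Jm) g ∧ Dominates v Jp Jm g f := by
  rintro ⟨g, hg, ⟨j, hj, hne⟩, hp, hm⟩
  rw [← hl, List.mem_toFinset] at hj
  obtain ⟨i, hi, hpre⟩ := List.exists_first_ne ⟨j, hj, hne⟩
  have hprefix : IsJCircuit (l.take (i.1 + 1)).toFinset g :=
    hg.mono (hl ▸ fun x hx => List.mem_toFinset.mpr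
      (List.mem_of_mem_take (List.mem_toFinset.mp hx)))
  obtain ⟨hgreedy_p, hgreedy_m⟩ := hgreedy.le_of_eqOn_take i hprefix hpre
  have hiJ : l[i] ∈ Jp ∪ Jm := hl ▸ List.mem_toFinset.mpr (List.getElem_mem i.2)
  rcases Finset.mem_union.mp hiJ with hip | him
  · exact hi (hv.injective ((hp _ hip).antisymm (hgreedy_p hip)))
  · exact hi (hv.injective ((hgreedy_m him).antisymm (hm _ him)))
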